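/- Let X₁, …, Xₙ be i.i.d. real random variables with E[|X₁|^q] < ∞ for an even integer q ≥ 2 and mean m. Then E[ | (1/n)·Σ_{i=1}^n (X_i − m) |^q ] ≤ C_q · n^{−q/2} for a constant C_q depending only on q and E[|X₁ − m|^q] (Marcinkiewicz–Zygmund / moment bound), and in particular (1/n^q)·E[|Σ (X_i − m)|^q] = O(n^{−q/2}). -/

import Mathlib

/-!
Expand `(∑ i ∈ s, Y i) ^ q` as a sum over words `f : Fin q → s`. By independence the word `f`
contributes `∏ i, E[(Y i) ^ c i]`, where `c i` counts the occurrences of the letter `i` in `f`.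
Since the `Y i` are centred, a word contributes nothing as soon as some letter occurs exactly once;
the remaining words use at most `q / 2` distinct letters, so there are at most
`#s ^ (q / 2) * (q / 2) ^ q` of them, and each contributes at most `(1 + K) ^ q` because
`|E[Y ^ c]| ≤ 1 + E[|Y| ^ q]` for `c ≤ q`. Dividing by `n ^ q` gives the rate `n ^ (-q / 2)`.
-/

open MeasureTheory ProbabilityTheory Finset

section Fibers

variable {ι α : Type*} [Fintype ι] [DecidableEq α]

def fiberCard (f : ι → α) (a : α) : ℕ := #{j | f j = a}

lemma sum_fiberCard_eq_card {f : ι → α} {s : Finset α} (hf : ∀ j, f j ∈ s) :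
    ∑ a ∈ s, fiberCard f a = Fintype.card ι :=
  (card_eq_sum_card_fiberwise fun j _ => hf j).symm

lemma prod_comp_eq_prod_pow_fiberCard {M : Type*} [CommMonoid M] {f : ι → α} {s : Finset α}
    (hf : ∀ j, f j ∈ s) (y : α → M) :
    ∏ j, y (f j) = ∏ a ∈ s, y a ^ fiberCard f a := by
  rw [← prod_fiberwise_of_maps_to' (fun j _ => hf j) y]
  simp only [prod_const, fiberCard]

lemma two_mul_card_image_le {f : ι → α} (hf : ∀ j, fiberCard f (f j) ≠ 1) :
    2 * #(univ.image f) ≤ Fintype.card ι := by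
  have hfiber : ∀ a ∈ univ.image f, 2 ≤ fiberCard f a := by
    simp only [mem_image, mem_univ, true_and, forall_exists_index, forall_apply_eq_imp_iff]
    intro j
    have : 0 < fiberCard f (f j) := card_pos.2 ⟨j, by simp⟩
    have := hf j
    omega
  calc 2 * #(univ.image f) = ∑ _a ∈ univ.image f, 2 := by rw [sum_const, smul_eq_mul, mul_comm]
    _ ≤ ∑ a ∈ univ.image f, fiberCard f a := sum_le_sum hfiber
    _ = Fintype.card ι := sum_fiberCard_eq_card fun j => mem_image_of_mem f (mem_univ j)

lemma fiberCard_le_card (f : ι → α) (a : α) : fiberCard f a ≤ Fintype.card ι :=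
  card_le_univ _

variable [DecidableEq ι]

lemma card_filter_fiberCard_ne_one_le {s : Finset α} (hs : s.Nonempty) :
    #{f ∈ Fintype.piFinset (fun _ : ι => s) | ∀ a ∈ s, fiberCard f a ≠ 1}
      ≤ #s ^ (Fintype.card ι / 2) * (Fintype.card ι / 2) ^ Fintype.card ι := by
  set h := Fintype.card ι / 2
  set k := min h #s
  have hsub : {f ∈ Fintype.piFinset (fun _ : ι => s) | ∀ a ∈ s, fiberCard f a ≠ 1}
      ⊆ (s.powersetCard k).biUnion fun T => Fintype.piFinset fun _ : ι => T := by
    intro f hf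
    simp only [mem_filter, Fintype.mem_piFinset] at hf
    obtain ⟨hfs, hf1⟩ := hf
    have himage : univ.image f ⊆ s := by simpa [image_subset_iff] using hfs
    have hk : #(univ.image f) ≤ k :=
      le_min (by have := two_mul_card_image_le fun j => hf1 _ (hfs j); omega) (card_le_card himage)
    obtain ⟨T, hfT, hTs, hTk⟩ := exists_subsuperset_card_eq himage hk (min_le_right _ _)
    exact mem_biUnion.2 ⟨T, mem_powersetCard.2 ⟨hTs, hTk⟩,
      Fintype.mem_piFinset.2 fun j => hfT (mem_image_of_mem f (mem_univ j))⟩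
  calc _ ≤ #((s.powersetCard k).biUnion fun T => Fintype.piFinset fun _ : ι => T) :=
        card_le_card hsub
    _ ≤ ∑ T ∈ s.powersetCard k, #(Fintype.piFinset fun _ : ι => T) := card_biUnion_le
    _ = (#s).choose k * k ^ Fintype.card ι := by
        rw [← card_powersetCard, ← smul_eq_mul, ← sum_const]
        refine sum_congr rfl fun T hT => ?_
        rw [Fintype.card_piFinset, prod_const, (mem_powersetCard.1 hT).2, card_univ]
    _ ≤ #s ^ h * h ^ Fintype.card ι :=
        Nat.mul_le_mul
          ((Nat.choose_le_pow _ _).trans (Nat.pow_le_pow_right hs.card_pos (min_le_left _ _)))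
          (Nat.pow_le_pow_left (min_le_left _ _) _)

end Fibers

section Moments

variable {Ω : Type*} [MeasurableSpace Ω] {P : Measure Ω}

lemma iIndepFun.integral_finset_prod_comp {ι : Type*} {Y : ι → Ω → ℝ} (hY : iIndepFun Y P)
    (hYm : ∀ i, AEMeasurable (Y i) P) {g : ι → ℝ → ℝ} (hg : ∀ i, Measurable (g i))
    (s : Finset ι) :
    ∫ ω, ∏ i ∈ s, g i (Y i ω) ∂P = ∏ i ∈ s, ∫ ω, g i (Y i ω) ∂P := by
  have := (hY.precomp Subtype.val_injective).integral_fun_prod_comp (f := fun i : s => g i)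
    (fun i => hYm i) (fun i => (hg i).aestronglyMeasurable)
  simp_rw [← prod_coe_sort s]
  exact this

lemma integrable_prod_of_memLp_card {ι : Type*} [Fintype ι] [IsFiniteMeasure P]
    {Z : ι → Ω → ℝ} (hZ : ∀ j, MemLp (Z j) (Fintype.card ι) P) :
    Integrable (fun ω => ∏ j, Z j ω) P := by
  refine (MemLp.prod' fun j _ => hZ j).integrable ?_
  rw [sum_const, card_univ, nsmul_eq_mul, ENNReal.one_le_inv]
  exact ENNReal.mul_inv_le_one _

variable [IsProbabilityMeasure P]

lemma abs_integral_pow_le_one_add {Y : Ω → ℝ} {q c : ℕ} (hY : MemLp Y q P) (hc : c ≤ q) :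
    |∫ ω, Y ω ^ c ∂P| ≤ 1 + ∫ ω, |Y ω| ^ q ∂P := by
  have hYq : Integrable (fun ω => |Y ω| ^ q) P := by simpa using hY.integrable_norm_pow'
  calc |∫ ω, Y ω ^ c ∂P| ≤ ∫ ω, |Y ω| ^ c ∂P := by
        simpa only [Real.norm_eq_abs, abs_pow] using
          norm_integral_le_integral_norm (μ := P) fun ω => Y ω ^ c
    _ ≤ ∫ ω, (1 + |Y ω| ^ q) ∂P := by
        refine integral_mono_of_nonneg (.of_forall fun ω => by positivity)
          ((integrable_const 1).add hYq) (.of_forall fun ω => ?_)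
        rcases le_total |Y ω| 1 with h | h
        · linarith [pow_le_one₀ (abs_nonneg (Y ω)) h (n := c), pow_nonneg (abs_nonneg (Y ω)) q]
        · linarith [pow_le_pow_right₀ h hc]
    _ = 1 + ∫ ω, |Y ω| ^ q ∂P := by
        rw [integral_add (integrable_const 1) hYq, integral_const, probReal_univ, one_smul]

lemma abs_integral_pow_le_pow {Y : Ω → ℝ} {q c : ℕ} (hY : MemLp Y q P) (hc : c ≤ q) :
    |∫ ω, Y ω ^ c ∂P| ≤ (1 + ∫ ω, |Y ω| ^ q ∂P) ^ c := by
  rcases Nat.eq_zero_or_pos c with rfl | hc0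
  · simp
  have : 0 ≤ ∫ ω, |Y ω| ^ q ∂P := integral_nonneg fun ω => by positivity
  exact (abs_integral_pow_le_one_add hY hc).trans (le_self_pow₀ (by linarith) hc0.ne')

lemma integral_sum_pow_eq_sum_prod_integral_pow {ι : Type*} [DecidableEq ι] {Y : ι → Ω → ℝ}
    (hY : iIndepFun Y P) {q : ℕ} (hYq : ∀ i, MemLp (Y i) q P) (s : Finset ι) :
    ∫ ω, (∑ i ∈ s, Y i ω) ^ q ∂P
      = ∑ f ∈ Fintype.piFinset (fun _ : Fin q => s), ∏ i ∈ s, ∫ ω, Y i ω ^ fiberCard f i ∂P := by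
  have hexpand : ∀ ω, (∑ i ∈ s, Y i ω) ^ q
      = ∑ f ∈ Fintype.piFinset (fun _ : Fin q => s), ∏ j, Y (f j) ω := fun ω => by
    rw [← Fin.prod_const, prod_univ_sum]
  simp_rw [hexpand]
  rw [integral_finsetSum _ fun f _ =>
    integrable_prod_of_memLp_card fun j => by simpa using hYq (f j)]
  refine sum_congr rfl fun f hf => ?_
  have hregroup : ∀ ω, ∏ j, Y (f j) ω = ∏ i ∈ s, Y i ω ^ fiberCard f i := fun ω =>
    prod_comp_eq_prod_pow_fiberCard (Fintype.mem_piFinset.1 hf) (Y · ω)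
  simp_rw [hregroup]
  exact iIndepFun.integral_finset_prod_comp hY (fun i => (hYq i).aestronglyMeasurable.aemeasurable)
    (fun i => measurable_id.pow_const _) s

lemma abs_integral_sum_pow_le {ι : Type*} [DecidableEq ι] {Y : ι → Ω → ℝ}
    (hY : iIndepFun Y P) {q : ℕ} (hYq : ∀ i, MemLp (Y i) q P) (hmean : ∀ i, ∫ ω, Y i ω ∂P = 0)
    {K : ℝ} (hK : ∀ i, ∫ ω, |Y i ω| ^ q ∂P ≤ K) {s : Finset ι} (hs : s.Nonempty) :
    |∫ ω, (∑ i ∈ s, Y i ω) ^ q ∂P| ≤ (#s ^ (q / 2) * (q / 2) ^ q : ℕ) * (1 + K) ^ q := by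
  have hsupport : ∀ f ∈ Fintype.piFinset (fun _ : Fin q => s),
      ∏ i ∈ s, ∫ ω, Y i ω ^ fiberCard f i ∂P ≠ 0 → ∀ a ∈ s, fiberCard f a ≠ 1 :=
    fun f _ hne a ha h1 => hne (prod_eq_zero ha (by simpa [h1] using hmean a))
  have hterm : ∀ f ∈ Fintype.piFinset (fun _ : Fin q => s),
      |∏ i ∈ s, ∫ ω, Y i ω ^ fiberCard f i ∂P| ≤ (1 + K) ^ q := fun f hf => by
    calc |∏ i ∈ s, ∫ ω, Y i ω ^ fiberCard f i ∂P| ≤ ∏ i ∈ s, (1 + K) ^ fiberCard f i := by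
          rw [abs_prod]
          refine prod_le_prod (fun i _ => abs_nonneg _) fun i _ => ?_
          have hYi : 0 ≤ ∫ ω, |Y i ω| ^ q ∂P := integral_nonneg fun ω => by positivity
          have hc : fiberCard f i ≤ q := (fiberCard_le_card f i).trans_eq (Fintype.card_fin q)
          exact (abs_integral_pow_le_pow (hYq i) hc).trans
            (pow_le_pow_left₀ (by linarith) (by linarith [hK i]) _)
      _ = (1 + K) ^ q := by
          rw [prod_pow_eq_pow_sum, sum_fiberCard_eq_card (Fintype.mem_piFinset.1 hf),
            Fintype.card_fin]
  rw [integral_sum_pow_eq_sum_prod_integral_pow hY hYq, ← sum_filter_of_ne hsupport]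
  calc _ ≤ ∑ f ∈ Fintype.piFinset (fun _ : Fin q => s) with ∀ a ∈ s, fiberCard f a ≠ 1,
          |∏ i ∈ s, ∫ ω, Y i ω ^ fiberCard f i ∂P| := abs_sum_le_sum_abs _ _
    _ ≤ ∑ f ∈ Fintype.piFinset (fun _ : Fin q => s) with ∀ a ∈ s, fiberCard f a ≠ 1, (1 + K) ^ q :=
        sum_le_sum fun f hf => hterm f (mem_filter.1 hf).1
    _ ≤ (#s ^ (q / 2) * (q / 2) ^ q : ℕ) * (1 + K) ^ q := by
        rw [sum_const, nsmul_eq_mul]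
        have hK0 : 0 ≤ 1 + K := by
          obtain ⟨i, -⟩ := hs
          have hYi : 0 ≤ ∫ ω, |Y i ω| ^ q ∂P := integral_nonneg fun ω => by positivity
          linarith [hK i]
        gcongr
        exact_mod_cast (Fintype.card_fin q ▸ card_filter_fiberCard_ne_one_le hs)

end Moments

lemma one_div_pow_mul_pow_div_two {q : ℕ} (hq : Even q) {x : ℝ} (hx : 0 < x) :
    (1 / x) ^ q * x ^ (q / 2) = x ^ (-(q : ℝ) / 2) := by
  obtain ⟨k, rfl⟩ := hq
  rw [← two_mul, Nat.mul_div_cancel_left k two_pos, Nat.cast_mul, Nat.cast_two,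
    neg_div, mul_div_cancel_left₀ _ two_ne_zero, Real.rpow_neg hx.le, Real.rpow_natCast,
    one_div_pow, pow_mul']
  field_simp

theorem stmt_12_general {Ω : Type*} [MeasurableSpace Ω] (P : Measure Ω)
    [IsProbabilityMeasure P]
    (X : ℕ → Ω → ℝ)
    (hindep : iIndepFun X P)
    (hid : ∀ i, IdentDistrib (X i) (X 0) P P)
    (q : ℕ) (hq : 2 ≤ q) (hq_even : Even q)
    (hLq : MemLp (X 0) q P)
    (m : ℝ) (hm : ∫ ω, X 0 ω ∂P = m) :
    ∃ C : ℝ, 0 ≤ C ∧ ∀ n : ℕ, 1 ≤ n →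
      ∫ ω, |(1/(n:ℝ)) * ∑ i ∈ Finset.range n, (X i ω - m)| ^ q ∂P
        ≤ C * (n:ℝ) ^ (-(q:ℝ)/2) := by
  set Y : ℕ → Ω → ℝ := fun i ω => X i ω - m
  have hYid : ∀ i, IdentDistrib (Y i) (Y 0) P P := fun i => (hid i).comp (measurable_sub_const m)
  have hYq : ∀ i, MemLp (Y i) q P := fun i => (hYid i).symm.memLp_snd (hLq.sub (memLp_const m))
  have hmean : ∀ i, ∫ ω, Y i ω ∂P = 0 := fun i => by
    rw [(hYid i).integral_eq, integral_sub (hLq.integrable (by exact_mod_cast (by omega : 1 ≤ q)))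
      (integrable_const m), hm, integral_const, probReal_univ, one_smul, sub_self]
  set K := ∫ ω, |Y 0 ω| ^ q ∂P
  have hK : ∀ i, ∫ ω, |Y i ω| ^ q ∂P ≤ K := fun i =>
    ((hYid i).comp (by fun_prop : Measurable fun x : ℝ => |x| ^ q)).integral_eq.le
  refine ⟨((q / 2) ^ q : ℕ) * (1 + K) ^ q, by positivity, fun n hn => ?_⟩
  have hYindep : iIndepFun Y P := hindep.comp _ fun _ => measurable_sub_const m
  have hmoment := abs_integral_sum_pow_le hYindep hYq hmean hK
    (s := range n) (nonempty_range_iff.2 (by omega))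
  have hn0 : (0 : ℝ) < n := by exact_mod_cast hn
  calc ∫ ω, |(1 / (n : ℝ)) * ∑ i ∈ range n, (X i ω - m)| ^ q ∂P
      = (1 / (n : ℝ)) ^ q * ∫ ω, (∑ i ∈ range n, Y i ω) ^ q ∂P := by
        rw [← integral_const_mul]
        simp_rw [abs_mul, mul_pow, hq_even.pow_abs]
        rfl
    _ ≤ (1 / (n : ℝ)) ^ q * ((n ^ (q / 2) * (q / 2) ^ q : ℕ) * (1 + K) ^ q) := by
        gcongr
        simpa using (le_abs_self _).trans hmoment
    _ = ((q / 2) ^ q : ℕ) * (1 + K) ^ q * (n : ℝ) ^ (-(q : ℝ) / 2) := by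
        rw [← one_div_pow_mul_pow_div_two hq_even hn0]
        push_cast
        ring

theorem stmt_12 {Ω : Type*} [MeasurableSpace Ω] (P : Measure Ω)
    [IsProbabilityMeasure P]
    (X : ℕ → Ω → ℝ) (hmeas : ∀ i, Measurable (X i))
    (hindep : iIndepFun X P)
    (hid : ∀ i, IdentDistrib (X i) (X 0) P P)
    (q : ℕ) (hq : 2 ≤ q) (hq_even : Even q)
    (hLq : MemLp (X 0) q P)
    (m : ℝ) (hm : ∫ ω, X 0 ω ∂P = m) :
    ∃ C : ℝ, 0 ≤ C ∧ ∀ n : ℕ, 1 ≤ n →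
      ∫ ω, |(1/(n:ℝ)) * ∑ i ∈ Finset.range n, (X i ω - m)| ^ q ∂P
        ≤ C * (n:ℝ) ^ (-(q:ℝ)/2) :=
  stmt_12_general P X hindep hid q hq hq_even hLq m hm
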